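/- The truncation map τ : H_{S⊎Y} X → H_S X commutes with Kleisli lifting: for every f : X → H_{S⊎Y} Z, τ ∘ f⋆_{S⊎Y} = (τ ∘ f)⋆_S ∘ τ; hence τ is a monad morphism from H_{S⊎Y} to H_S. -/

import Mathlib

noncomputable section
attribute [local instance] Classical.propDecidable

/-- Finite open trajectories over `S`: domain `[0, d)` with `d : ℝ≥0`. -/
def FTrj (S : Type) : Type := Σ d : NNReal, ({t : NNReal // t < d} → S)

/-- Closed trajectories over `S`: domain `[0, d]` with `d : ℝ≥0`. -/
def CTrj (S : Type) : Type := Σ d : NNReal, ({t : NNReal // t ≤ d} → S)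

/-- Open trajectories over `S`: domain `[0, d)` with `d : [0,∞]`. -/
def OTrj (S : Type) : Type := Σ d : ENNReal, ({t : NNReal // (t : ENNReal) < d} → S)

/-- Divergent trajectories: closed-divergent or open-divergent. -/
def DTrj (S : Type) : Type := CTrj S ⊕ OTrj S

/-- The monad `H_S X = (Σ_{I ∈ [0,ℝ≥0)} S^I × X) ⊎ (Σ_{I ∈ [0,∞]-downsets} S^I)`. -/
def HS (S X : Type) : Type := (FTrj S × X) ⊕ DTrj S

/-- The empty finite open trajectory. -/
def FTrj.eps (S : Type) : FTrj S :=
  ⟨0, fun t => absurd t.2 (by exact not_lt.mpr zero_le)⟩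

/-- Unit of `H_S`: the empty trajectory paired with the return value. -/
def HS.eta {S X : Type} (x : X) : HS S X := Sum.inl (FTrj.eps S, x)

/-- The map `ι : H_S X → X ⊎ (S ⊎ {⊥})`. -/
def HS.iota {S X : Type} : HS S X → X ⊕ (S ⊕ Unit)
  | Sum.inl (⟨d, e⟩, x) =>
      if h : 0 < d then Sum.inr (Sum.inl (e ⟨0, h⟩)) else Sum.inl x
  | Sum.inr (Sum.inl ⟨d, e⟩) => Sum.inr (Sum.inl (e ⟨0, zero_le⟩))
  | Sum.inr (Sum.inr ⟨d, e⟩) =>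
      if h : 0 < d then Sum.inr (Sum.inl (e ⟨0, by simpa using h⟩))
      else Sum.inr (Sum.inr ())

/-- Concatenation of finite open trajectories. -/
def FTrj.concat {S : Type} (p q : FTrj S) : FTrj S :=
  ⟨p.1 + q.1, fun t =>
    if h : t.1 < p.1 then p.2 ⟨t.1, h⟩
    else q.2 ⟨t.1 - p.1, (tsub_lt_iff_left (not_lt.mp h)).mpr t.2⟩⟩

/-- Action of a finite open trajectory on a closed trajectory. -/
def FTrj.actC {S : Type} (p : FTrj S) (q : CTrj S) : CTrj S :=
  ⟨p.1 + q.1, fun t =>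
    if h : t.1 < p.1 then p.2 ⟨t.1, h⟩
    else q.2 ⟨t.1 - p.1, tsub_le_iff_left.mpr t.2⟩⟩

/-- Action of a finite open trajectory on an open trajectory. -/
def FTrj.actO {S : Type} (p : FTrj S) (q : OTrj S) : OTrj S :=
  ⟨(p.1 : ENNReal) + q.1, fun t =>
    if h : t.1 < p.1 then p.2 ⟨t.1, h⟩
    else q.2 ⟨t.1 - p.1, by
      have h2 := t.2
      rw [ENNReal.coe_sub]
      exact (ENNReal.sub_lt_iff_lt_right ENNReal.coe_ne_top
        (by exact_mod_cast not_lt.mp h)).mpr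
        (h2.trans_le (add_comm ((p.1 : ENNReal)) q.1).le)⟩⟩

/-- Action of a finite open trajectory on a divergent trajectory. -/
def FTrj.actD {S : Type} (p : FTrj S) : DTrj S → DTrj S
  | Sum.inl c => Sum.inl (p.actC c)
  | Sum.inr o => Sum.inr (p.actO o)

/-- Kleisli lifting of `H_S`: trajectory concatenation, divergence absorbing. -/
def HS.bind {S X Y : Type} (f : X → HS S Y) : HS S X → HS S Y
  | Sum.inl (m, x) =>
    match f x with
    | Sum.inl (n, y) => Sum.inl (m.concat n, y)
    | Sum.inr e => Sum.inr (m.actD e)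
  | Sum.inr e => Sum.inr e

/-- Truncation of a trajectory over `S ⊎ Y` at the first time its value
leaves the left summand, given that this happens somewhere: the result is
the largest trajectory `⟨I', e'⟩` over `S` with `e t = inl (e' t)` on `I'`,
regarded as a divergent trajectory. -/
def trunc {S Y : Type} {P : NNReal → Prop}
    (hP : ∀ ⦃s t : NNReal⦄, s ≤ t → P t → P s)
    (e : {t : NNReal // P t} → S ⊕ Y)
    (hne : ∃ t : NNReal, ∃ h : P t, (e ⟨t, h⟩).isRight) : DTrj S :=
  let Bad : Set NNReal := {t : NNReal | ∃ h : P t, (e ⟨t, h⟩).isRight}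
  let d' : NNReal := sInf Bad
  have hmem : d' ≤ hne.choose := csInf_le (OrderBot.bddBelow _) hne.choose_spec
  have hPd' : P d' := hP hmem hne.choose_spec.choose
  have hleft : ∀ (t : NNReal) (ht : P t), t ≤ d' → t ≠ d' → (e ⟨t, ht⟩).isLeft := by
    intro t ht hle hned
    by_contra hcon
    have hr : (e ⟨t, ht⟩).isRight := by
      rcases hE : e ⟨t, ht⟩ with a | b
      · rw [hE] at hcon; simp at hcon
      · simp
    have hge : d' ≤ t := csInf_le (OrderBot.bddBelow _) ⟨ht, hr⟩
    exact hned (le_antisymm hle hge)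
  if hbad : (e ⟨d', hPd'⟩).isRight then
    -- divergence exactly at `d'`: the result is the open trajectory `[0, d')`
    Sum.inr ⟨(d' : ENNReal), fun t =>
      (e ⟨t.1, hP (le_of_lt (by exact_mod_cast t.2)) hPd'⟩).getLeft
        (hleft t.1 _ (le_of_lt (by exact_mod_cast t.2))
          (ne_of_lt (by exact_mod_cast t.2)))⟩
  else
    -- divergence strictly after `d'`: the result is the closed trajectory `[0, d']`
    Sum.inl ⟨d', fun t =>
      (e ⟨t.1, hP t.2 hPd'⟩).getLeft (by
        by_cases h : t.1 = d'
        · have he : (⟨t.1, hP t.2 hPd'⟩ : {t : NNReal // P t}) = ⟨d', hPd'⟩ :=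
            Subtype.ext h
          rw [he]
          rcases hE : e ⟨d', hPd'⟩ with a | b
          · simp
          · rw [hE] at hbad; simp at hbad
        · exact hleft t.1 _ t.2 h)⟩

/-- The truncation map `τ : H_{S⊎Y} X → H_S X`. -/
def HS.tau {S Y X : Type} : HS (S ⊕ Y) X → HS S X
  | Sum.inl (⟨d, e⟩, x) =>
      if hne : ∃ t : NNReal, ∃ h : t < d, (e ⟨t, h⟩).isRight then
        Sum.inr (trunc (fun _ _ hst ht => lt_of_le_of_lt hst ht) e hne)
      else
        Sum.inl (⟨d, fun t => (e t).getLeft (by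
          have h : t.1 < d → (e t).isLeft := by simpa using not_exists.mp hne t.1
          exact h t.2)⟩, x)
  | Sum.inr (Sum.inl ⟨d, e⟩) =>
      if hne : ∃ t : NNReal, ∃ h : t ≤ d, (e ⟨t, h⟩).isRight then
        Sum.inr (trunc (fun _ _ hst ht => le_trans hst ht) e hne)
      else
        Sum.inr (Sum.inl ⟨d, fun t => (e t).getLeft (by
          have h : t.1 ≤ d → (e t).isLeft := by simpa using not_exists.mp hne t.1
          exact h t.2)⟩)
  | Sum.inr (Sum.inr ⟨d, e⟩) =>
      if hne : ∃ t : NNReal, ∃ h : (t : ENNReal) < d, (e ⟨t, h⟩).isRight then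
        Sum.inr (trunc (fun _ _ hst ht => lt_of_le_of_lt (by exact_mod_cast hst) ht) e hne)
      else
        Sum.inr (Sum.inr ⟨d, fun t => (e t).getLeft (by
          have h : (t.1 : ENNReal) < d → (e t).isLeft := by
            simpa using not_exists.mp hne t.1
          exact h t.2)⟩)

/-!
All three shapes of trajectory are handled through their domain predicates, so that `τ` becomes
`HS.truncOr`: truncate at the infimum of the exit times if the trajectory ever leaves `S`,
and corestrict it to `S` otherwise. On `inl (m, x)` the Kleisli lifting prepends `m` to `f x`,
and each of the three concatenations satisfies `IsConcat`. If `m` already leaves `S`, the first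
exit of the concatenation happens inside `m`, and truncation sees only `m`. Otherwise the exit
times of the concatenation are those of the appended trajectory shifted by the length of `m`;
translation is continuous and monotone, so it commutes with the infimum, and truncation commutes
with prepending the corestriction of `m`.
-/

theorem sigma_subtype_ext {S ι : Type} {D : ι → NNReal → Prop} {d₁ d₂ : ι} (h : d₁ = d₂)
    (f₁ : {t : NNReal // D d₁ t} → S) (f₂ : {t : NNReal // D d₂ t} → S)
    (hf : ∀ t h₁ h₂, f₁ ⟨t, h₁⟩ = f₂ ⟨t, h₂⟩) :
    (⟨d₁, f₁⟩ : Σ d, ({t : NNReal // D d t} → S)) = ⟨d₂, f₂⟩ := by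
  subst h
  exact congrArg _ (funext fun t => hf t.1 t.2 t.2)

theorem Sum.getLeft_congr {S Y : Type} {x y : S ⊕ Y} (h : x = y) (hx : x.isLeft)
    (hy : y.isLeft) : x.getLeft hx = y.getLeft hy := by
  subst h
  rfl

section Exit

variable {S Y : Type} {P : NNReal → Prop}

/- Both are reducible so that they match the sets and conditions written out in `trunc`. -/
abbrev ExitsLeft (e : {t : NNReal // P t} → S ⊕ Y) : Prop :=
  ∃ t : NNReal, ∃ h : P t, (e ⟨t, h⟩).isRight

abbrev exitTimes (e : {t : NNReal // P t} → S ⊕ Y) : Set NNReal :=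
  {t | ∃ h : P t, (e ⟨t, h⟩).isRight}

def corestrictLeft (e : {t : NNReal // P t} → S ⊕ Y) (he : ¬ ExitsLeft e) :
    {t : NNReal // P t} → S :=
  fun t => (e t).getLeft (by
    simpa [ExitsLeft] using fun h : (e t).isRight => he ⟨t.1, t.2, h⟩)

theorem mem_sInf_exitTimes (hP : ∀ ⦃s t : NNReal⦄, s ≤ t → P t → P s)
    {e : {t : NNReal // P t} → S ⊕ Y} (he : ExitsLeft e) : P (sInf (exitTimes e)) := by
  obtain ⟨t, ht, hr⟩ := he
  exact hP (csInf_le (OrderBot.bddBelow _) ⟨ht, hr⟩) ht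

theorem trunc_congr {Q : NNReal → Prop} (hP : ∀ ⦃s t : NNReal⦄, s ≤ t → P t → P s)
    (hQ : ∀ ⦃s t : NNReal⦄, s ≤ t → Q t → Q s) {e : {t : NNReal // P t} → S ⊕ Y}
    {g : {t : NNReal // Q t} → S ⊕ Y} (he : ExitsLeft e) (hg : ExitsLeft g)
    (hinf : sInf (exitTimes e) = sInf (exitTimes g))
    (hval : ∀ t hp hq, t ≤ sInf (exitTimes e) → e ⟨t, hp⟩ = g ⟨t, hq⟩) :
    trunc hP e he = trunc hQ g hg := by
  have hPd := mem_sInf_exitTimes hP he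
  have hQd := mem_sInf_exitTimes hQ hg
  have hev : e ⟨_, hPd⟩ = g ⟨_, hQd⟩ :=
    (hval _ hPd (hinf ▸ hQd) le_rfl).trans (congrArg g (Subtype.ext hinf))
  unfold trunc
  by_cases h₁ : (e ⟨_, hPd⟩).isRight
  · have h₂ : (g ⟨_, hQd⟩).isRight := hev ▸ h₁
    simp only [h₁, h₂, ↓reduceDIte]
    refine congrArg Sum.inr (sigma_subtype_ext (D := fun d t => (t : ENNReal) < d)
      (congrArg _ hinf) _ _ fun t ht _ => Sum.getLeft_congr (hval t _ _ ?_) _ _)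
    exact (ENNReal.coe_lt_coe.mp ht).le
  · have h₂ : ¬ (g ⟨_, hQd⟩).isRight := hev ▸ h₁
    simp only [h₁, h₂, Bool.false_eq_true, ↓reduceDIte]
    exact congrArg Sum.inl (sigma_subtype_ext (D := fun d t => t ≤ d)
      hinf _ _ fun t ht _ => Sum.getLeft_congr (hval t _ _ ht) _ _)

end Exit

/- `E` is `m` followed by `e`, the domains of `e` and `E` being given by `P` and `Q`. -/
structure IsConcat {S : Type} {P Q : NNReal → Prop} (m : FTrj S)
    (e : {t : NNReal // P t} → S) (E : {t : NNReal // Q t} → S) : Prop where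
  mem_of_lt : ∀ t, t < m.1 → Q t
  add_mem : ∀ t, P t → Q (m.1 + t)
  sub_mem : ∀ t, Q t → m.1 ≤ t → P (t - m.1)
  apply_of_lt : ∀ t (h : t < m.1) (hq : Q t), E ⟨t, hq⟩ = m.2 ⟨t, h⟩
  apply_of_le : ∀ t (hq : Q t), m.1 ≤ t → ∀ hp : P (t - m.1), E ⟨t, hq⟩ = e ⟨t - m.1, hp⟩

theorem IsConcat.unique {S : Type} {P Q : NNReal → Prop} {m : FTrj S}
    {e : {t : NNReal // P t} → S} {E E' : {t : NNReal // Q t} → S}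
    (h : IsConcat m e E) (h' : IsConcat m e E') : E = E' := by
  funext ⟨t, hq⟩
  by_cases ht : t < m.1
  · rw [h.apply_of_lt t ht, h'.apply_of_lt t ht]
  · have hle := not_lt.mp ht
    rw [h.apply_of_le t hq hle (h.sub_mem t hq hle), h'.apply_of_le t hq hle (h.sub_mem t hq hle)]

namespace FTrj

variable {S : Type}

theorem isConcat_concat (m n : FTrj S) : IsConcat m n.2 (m.concat n).2 where
  mem_of_lt _ h := h.trans_le le_self_add
  add_mem _ h := add_lt_add_right h m.1
  sub_mem _ h hle := (tsub_lt_iff_left hle).mpr h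
  apply_of_lt _ h _ := dif_pos h
  apply_of_le _ _ h _ := dif_neg (not_lt.mpr h)

theorem isConcat_actC (m : FTrj S) (c : CTrj S) : IsConcat m c.2 (m.actC c).2 where
  mem_of_lt _ h := (h.trans_le le_self_add).le
  add_mem _ h := add_le_add_right h m.1
  sub_mem _ h _ := tsub_le_iff_left.mpr h
  apply_of_lt _ h _ := dif_pos h
  apply_of_le _ _ h _ := dif_neg (not_lt.mpr h)

theorem isConcat_actO (m : FTrj S) (o : OTrj S) : IsConcat m o.2 (m.actO o).2 where
  mem_of_lt _ h := (ENNReal.coe_lt_coe.mpr h).trans_le le_self_add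
  add_mem _ h := by
    push_cast
    exact ENNReal.add_lt_add_left ENNReal.coe_ne_top h
  sub_mem _ h hle := by
    rw [ENNReal.coe_sub]
    exact (ENNReal.sub_lt_iff_lt_right ENNReal.coe_ne_top (by exact_mod_cast hle)).mpr
      (h.trans_le (add_comm _ _).le)
  apply_of_lt _ h _ := dif_pos h
  apply_of_le _ _ h _ := dif_neg (not_lt.mpr h)

end FTrj

namespace IsConcat

variable {S Y : Type} {P Q : NNReal → Prop} {m : FTrj (S ⊕ Y)}
  {e : {t : NNReal // P t} → S ⊕ Y} {E : {t : NNReal // Q t} → S ⊕ Y}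

theorem exitsLeft_of_left (hc : IsConcat m e E) (hm : ExitsLeft m.2) : ExitsLeft E := by
  obtain ⟨t, ht, hr⟩ := hm
  exact ⟨t, hc.mem_of_lt t ht, by rwa [hc.apply_of_lt t ht]⟩

theorem add_mem_exitTimes (hc : IsConcat m e E) {t : NNReal} (he : t ∈ exitTimes e) :
    m.1 + t ∈ exitTimes E := by
  obtain ⟨ht, hr⟩ := he
  refine ⟨hc.add_mem t ht, ?_⟩
  rw [hc.apply_of_le _ _ le_self_add (by rwa [add_tsub_cancel_left])]
  convert hr using 3
  exact Subtype.ext (add_tsub_cancel_left m.1 t)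

theorem exitsLeft_of_right (hc : IsConcat m e E) (he : ExitsLeft e) : ExitsLeft E :=
  let ⟨t, ht⟩ := he
  ⟨m.1 + t, hc.add_mem_exitTimes ht⟩

theorem exitTimes_eq (hc : IsConcat m e E) (hm : ¬ ExitsLeft m.2) :
    exitTimes E = (m.1 + ·) '' exitTimes e := by
  ext t
  refine ⟨fun ⟨hq, hr⟩ => ?_, fun ⟨s, hs, hst⟩ => hst ▸ hc.add_mem_exitTimes hs⟩
  by_cases ht : t < m.1
  · exact absurd ⟨t, ht, by rwa [← hc.apply_of_lt t ht hq]⟩ hm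
  · have hle := not_lt.mp ht
    exact ⟨t - m.1, ⟨hc.sub_mem t hq hle, by rwa [← hc.apply_of_le t hq hle]⟩,
      add_tsub_cancel_of_le hle⟩

theorem not_exitsLeft (hc : IsConcat m e E) (hm : ¬ ExitsLeft m.2) (he : ¬ ExitsLeft e) :
    ¬ ExitsLeft E := by
  rintro ⟨t, ht⟩
  obtain ⟨s, hs, -⟩ : t ∈ (m.1 + ·) '' exitTimes e := hc.exitTimes_eq hm ▸ ht
  exact he ⟨s, hs⟩

theorem corestrictLeft (hc : IsConcat m e E) (hm : ¬ ExitsLeft m.2) (he : ¬ ExitsLeft e) :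
    IsConcat ⟨m.1, corestrictLeft m.2 hm⟩ (corestrictLeft e he)
      (corestrictLeft E (hc.not_exitsLeft hm he)) where
  mem_of_lt := hc.mem_of_lt
  add_mem := hc.add_mem
  sub_mem := hc.sub_mem
  apply_of_lt t ht hq := Sum.getLeft_congr (hc.apply_of_lt t ht hq) _ _
  apply_of_le t hq ht hp := Sum.getLeft_congr (hc.apply_of_le t hq ht hp) _ _

theorem trunc_eq_trunc_left (hQ : ∀ ⦃s t : NNReal⦄, s ≤ t → Q t → Q s)
    (hc : IsConcat m e E) (hm : ExitsLeft m.2) :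
    trunc hQ E (hc.exitsLeft_of_left hm) = trunc (fun _ _ hst ht => hst.trans_lt ht) m.2 hm := by
  have hle : ∀ t ∈ exitTimes E, sInf (exitTimes m.2) ≤ t := by
    rintro t ⟨hq, hr⟩
    by_cases ht : t < m.1
    · exact csInf_le (OrderBot.bddBelow _)
        (show t ∈ exitTimes m.2 from ⟨ht, by rwa [← hc.apply_of_lt t ht hq]⟩)
    · obtain ⟨s, hs, hr'⟩ := hm
      exact (csInf_le (OrderBot.bddBelow _) (show s ∈ exitTimes m.2 from ⟨hs, hr'⟩)).trans
        (hs.le.trans (not_lt.mp ht))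
  have hsub : exitTimes m.2 ⊆ exitTimes E := fun t ⟨ht, hr⟩ =>
    ⟨hc.mem_of_lt t ht, by rwa [hc.apply_of_lt t ht]⟩
  refine trunc_congr _ _ _ _ ?_ fun t hq ht _ => hc.apply_of_lt t ht hq
  exact le_antisymm (csInf_le_csInf (OrderBot.bddBelow _) hm hsub)
    (le_csInf (hc.exitsLeft_of_left hm) hle)

theorem trunc_eq_actD (hP : ∀ ⦃s t : NNReal⦄, s ≤ t → P t → P s)
    (hQ : ∀ ⦃s t : NNReal⦄, s ≤ t → Q t → Q s) {m' : {t : NNReal // t < m.1} → S}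
    (hm' : ∀ t, m.2 t = Sum.inl (m' t)) (hc : IsConcat m e E) (he : ExitsLeft e) :
    trunc hQ E (hc.exitsLeft_of_right he) = FTrj.actD ⟨m.1, m'⟩ (trunc hP e he) := by
  have hm : ¬ ExitsLeft m.2 := fun ⟨t, _, hr⟩ => by simp [hm'] at hr
  have hD : sInf (exitTimes E) = m.1 + sInf (exitTimes e) := by
    rw [hc.exitTimes_eq hm]
    exact (Monotone.map_csInf_of_continuousAt (continuous_const_add _).continuousAt
      (fun _ _ h => add_le_add_right h _) he).symm
  have hPd := mem_sInf_exitTimes hP he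
  have hQD := mem_sInf_exitTimes hQ (hc.exitsLeft_of_right he)
  have hev : E ⟨_, hQD⟩ = e ⟨_, hPd⟩ := by
    rw [hc.apply_of_le _ hQD (hD ▸ le_self_add) (by rwa [hD, add_tsub_cancel_left])]
    congr 2
    rw [hD, add_tsub_cancel_left]
  have hlow : ∀ t hq (ht : t < m.1) hl, (E ⟨t, hq⟩).getLeft hl = m' ⟨t, ht⟩ :=
    fun t hq ht _ => Sum.getLeft_congr ((hc.apply_of_lt t ht hq).trans (hm' _)) _ rfl
  have hhigh : ∀ t hq (ht : m.1 ≤ t) hp hl hl',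
      (E ⟨t, hq⟩).getLeft hl = (e ⟨t - m.1, hp⟩).getLeft hl' :=
    fun t hq ht hp _ _ => Sum.getLeft_congr (hc.apply_of_le t hq ht hp) _ _
  unfold trunc
  by_cases h : (e ⟨_, hPd⟩).isRight
  · have h' : (E ⟨_, hQD⟩).isRight := hev ▸ h
    simp only [h, h', ↓reduceDIte, FTrj.actD]
    refine congrArg Sum.inr (sigma_subtype_ext (D := fun d t => (t : ENNReal) < d)
      (by rw [hD, ENNReal.coe_add]) _ _ fun t _ _ => ?_)
    split
    exacts [hlow t _ ‹_› _, hhigh t _ (not_lt.mp ‹_›) _ _ _]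
  · have h' : ¬ (E ⟨_, hQD⟩).isRight := hev ▸ h
    simp only [h, h', Bool.false_eq_true, ↓reduceDIte, FTrj.actD]
    refine congrArg Sum.inl (sigma_subtype_ext (D := fun d t => t ≤ d) hD _ _ fun t _ _ => ?_)
    split
    exacts [hlow t _ ‹_› _, hhigh t _ (not_lt.mp ‹_›) _ _ _]

end IsConcat

namespace HS

variable {S Y X Z : Type} {P Q : NNReal → Prop}

/- `τ` on a trajectory with domain `P`; `k` rebuilds an element of `H_S` from the
corestricted trajectory. -/
def truncOr (hP : ∀ ⦃s t : NNReal⦄, s ≤ t → P t → P s) (e : {t : NNReal // P t} → S ⊕ Y)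
    (k : ({t : NNReal // P t} → S) → HS S Z) : HS S Z :=
  if h : ExitsLeft e then Sum.inr (trunc hP e h) else k (corestrictLeft e h)

def prepend (m : FTrj S) : HS S X → HS S X
  | Sum.inl (n, y) => Sum.inl (m.concat n, y)
  | Sum.inr d => Sum.inr (m.actD d)

theorem tau_inl (m : FTrj (S ⊕ Y)) (x : X) :
    HS.tau (Sum.inl (m, x)) =
      truncOr (fun _ _ hst ht => hst.trans_lt ht) m.2 (fun e => Sum.inl (⟨m.1, e⟩, x)) :=
  rfl

theorem bind_inl (f : X → HS S Z) (m : FTrj S) (x : X) :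
    HS.bind f (Sum.inl (m, x)) = prepend m (f x) :=
  rfl

theorem truncOr_of_exitsLeft (hP : ∀ ⦃s t : NNReal⦄, s ≤ t → P t → P s)
    {e : {t : NNReal // P t} → S ⊕ Y} (k : ({t : NNReal // P t} → S) → HS S Z)
    (he : ExitsLeft e) : truncOr hP e k = Sum.inr (trunc hP e he) :=
  dif_pos he

theorem truncOr_of_not_exitsLeft (hP : ∀ ⦃s t : NNReal⦄, s ≤ t → P t → P s)
    {e : {t : NNReal // P t} → S ⊕ Y} (k : ({t : NNReal // P t} → S) → HS S Z)
    (he : ¬ ExitsLeft e) : truncOr hP e k = k (corestrictLeft e he) :=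
  dif_neg he

theorem bind_truncOr (g : X → HS S Z) (hP : ∀ ⦃s t : NNReal⦄, s ≤ t → P t → P s)
    (e : {t : NNReal // P t} → S ⊕ Y) (k : ({t : NNReal // P t} → S) → HS S X) :
    HS.bind g (truncOr hP e k) = truncOr hP e (HS.bind g ∘ k) := by
  by_cases he : ExitsLeft e
  · rw [truncOr_of_exitsLeft _ _ he, truncOr_of_exitsLeft _ _ he]
    rfl
  · rw [truncOr_of_not_exitsLeft _ _ he, truncOr_of_not_exitsLeft _ _ he]
    rfl

theorem bind_tau_inr (g : X → HS S Z) (d : DTrj (S ⊕ Y)) :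
    HS.bind g (HS.tau (Sum.inr d)) = HS.tau (Sum.inr d) := by
  rcases d with c | o
  · exact bind_truncOr g _ c.2 fun e => Sum.inr (Sum.inl ⟨c.1, e⟩)
  · exact bind_truncOr g _ o.2 fun e => Sum.inr (Sum.inr ⟨o.1, e⟩)

theorem tau_eta (x : X) : HS.tau (HS.eta (S := S ⊕ Y) x) = HS.eta x := by
  have h0 : ¬ ExitsLeft (FTrj.eps (S ⊕ Y)).2 := fun ⟨_, ht, _⟩ => not_lt_zero ht
  refine (tau_inl _ x).trans ((truncOr_of_not_exitsLeft _ _ h0).trans ?_)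
  exact congrArg (fun m => Sum.inl (m, x)) (sigma_subtype_ext (D := fun d t => t < d) rfl _ _
    fun _ ht _ => absurd ht not_lt_zero)

theorem truncOr_of_isConcat (hP : ∀ ⦃s t : NNReal⦄, s ≤ t → P t → P s)
    (hQ : ∀ ⦃s t : NNReal⦄, s ≤ t → Q t → Q s) {m : FTrj (S ⊕ Y)}
    {e : {t : NNReal // P t} → S ⊕ Y} {E : {t : NNReal // Q t} → S ⊕ Y} (hc : IsConcat m e E)
    {k : ({t : NNReal // P t} → S) → HS S Z} {K : ({t : NNReal // Q t} → S) → HS S Z}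
    (hK : ∀ m' e' E', IsConcat ⟨m.1, m'⟩ e' E' → K E' = prepend ⟨m.1, m'⟩ (k e')) :
    truncOr hQ E K = truncOr (fun _ _ hst ht => hst.trans_lt ht) m.2
      (fun m' => prepend ⟨m.1, m'⟩ (truncOr hP e k)) := by
  by_cases hm : ExitsLeft m.2
  · rw [truncOr_of_exitsLeft _ _ (hc.exitsLeft_of_left hm), truncOr_of_exitsLeft _ _ hm,
      hc.trunc_eq_trunc_left hQ hm]
  rw [truncOr_of_not_exitsLeft _ _ hm]
  by_cases he : ExitsLeft e
  · rw [truncOr_of_exitsLeft _ _ (hc.exitsLeft_of_right he), truncOr_of_exitsLeft _ _ he,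
      hc.trunc_eq_actD hP hQ (fun t => (Sum.inl_getLeft _ _).symm) he]
    rfl
  · rw [truncOr_of_not_exitsLeft _ _ (hc.not_exitsLeft hm he), truncOr_of_not_exitsLeft _ _ he]
    exact hK _ _ _ (hc.corestrictLeft hm he)

theorem tau_prepend (m : FTrj (S ⊕ Y)) (q : HS (S ⊕ Y) X) :
    HS.tau (prepend m q) = truncOr (fun _ _ hst ht => hst.trans_lt ht) m.2
      (fun m' => prepend ⟨m.1, m'⟩ (HS.tau q)) := by
  rcases q with ⟨n, y⟩ | c | o
  · refine truncOr_of_isConcat (k := fun e => Sum.inl (⟨n.1, e⟩, y))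
      (K := fun E => Sum.inl (⟨(m.concat n).1, E⟩, y)) _ _ (m.isConcat_concat n)
      fun m' e' E' hc => ?_
    obtain rfl := hc.unique (FTrj.isConcat_concat _ ⟨n.1, e'⟩)
    rfl
  · refine truncOr_of_isConcat (k := fun e => Sum.inr (Sum.inl ⟨c.1, e⟩))
      (K := fun E => Sum.inr (Sum.inl ⟨(m.actC c).1, E⟩)) _ _ (m.isConcat_actC c)
      fun m' e' E' hc => ?_
    obtain rfl := hc.unique (FTrj.isConcat_actC _ ⟨c.1, e'⟩)
    rfl
  · refine truncOr_of_isConcat (k := fun e => Sum.inr (Sum.inr ⟨o.1, e⟩))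
      (K := fun E => Sum.inr (Sum.inr ⟨(m.actO o).1, E⟩)) _ _ (m.isConcat_actO o)
      fun m' e' E' hc => ?_
    obtain rfl := hc.unique (FTrj.isConcat_actO _ ⟨o.1, e'⟩)
    rfl

end HS

/-- `τ` commutes with Kleisli lifting, `τ ∘ f⋆_{S⊎Y} = (τ ∘ f)⋆_S ∘ τ`, and
preserves the unit; hence `τ` is a monad morphism from `H_{S⊎Y}` to `H_S`. -/
theorem tau_monad_morphism {S Y X Z : Type} (f : X → HS (S ⊕ Y) Z) :
    (∀ x : X, HS.tau (HS.eta (S := S ⊕ Y) x) = HS.eta (S := S) x) ∧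
    (∀ p : HS (S ⊕ Y) X,
      HS.tau (HS.bind f p) = HS.bind (fun x => HS.tau (f x)) (HS.tau p)) := by
  refine ⟨HS.tau_eta, ?_⟩
  rintro (⟨m, x⟩ | d)
  · rw [HS.bind_inl, HS.tau_prepend, HS.tau_inl]
    exact (HS.bind_truncOr (fun x => HS.tau (f x)) _ m.2 fun e => Sum.inl (⟨m.1, e⟩, x)).symm
  · exact (HS.bind_tau_inr _ d).symm
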